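/- Let k and d be positive integers and let r > 0 satisfy 4r ≤ π and 3r ≤ |1 − e^{4ir}|. Let f_1,…,f_d ∈ M_k(ℂ) be mutually orthogonal projections with f_1 + ⋯ + f_d = I, let β_1,…,β_d ∈ [−π, π], and set h = i·Σ_{j=1}^d β_j f_j. For each j let γ_j = β_j if |β_j| ≤ 4r, γ_j = 4r if β_j > 4r, γ_j = −4r if β_j < −4r, and set z = i·Σ_{j=1}^d γ_j f_j. Then for every unitary u ∈ U_k with ‖u − I‖ < 2r: |u − exp(z)|₂ ≤ 7·|u − exp(h)|₂. -/

import Mathlib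

/-!
On the range of the spectral projection `f j`, `exp h` and `exp z` act as the scalars `e^{iβ_j}`
and `e^{iγ_j}`, and `|x|₂² = Σ_j |x f_j|₂²` for every matrix `x`. So for `a = u - exp h` and
`w = exp h - exp z` it suffices to show `|w f_j|₂ ≤ 6 |a f_j|₂` for every `j`. This is trivial
unless `β_j` was truncated; then `t = |e^{iβ_j} - 1| ≥ |e^{4ir} - 1| ≥ 3r`, and writing
`a f_j = (u - 1) f_j - (e^{iβ_j} - 1) f_j` gives `|a f_j|₂ ≥ (t - 2r) |f_j|₂`, while
`|e^{iβ_j} - e^{iγ_j}| ≤ 2t ≤ 6(t - 2r)`. Hence `|u - exp z|₂ ≤ |a|₂ + |w|₂ ≤ 7 |a|₂`.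
-/

open Matrix

/-- The normalized trace `tr_k` on `M_k(ℂ)`. -/
noncomputable def trN {k : ℕ} (x : Matrix (Fin k) (Fin k) ℂ) : ℂ :=
  x.trace / (k : ℂ)

/-- The operator norm on `M_k(ℂ)` (acting on Euclidean space). -/
noncomputable def opN {k : ℕ} (x : Matrix (Fin k) (Fin k) ℂ) : ℝ :=
  ‖Matrix.toEuclideanCLM (𝕜 := ℂ) x‖

/-- The normalized Hilbert–Schmidt norm `|z|₂ = (tr_k(z*z))^{1/2}`. -/
noncomputable def hsN {k : ℕ} (x : Matrix (Fin k) (Fin k) ℂ) : ℝ :=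
  Real.sqrt (trN (star x * x)).re

theorem hsN_nonneg {k : ℕ} (A : Matrix (Fin k) (Fin k) ℂ) : 0 ≤ hsN A :=
  Real.sqrt_nonneg _

section Frobenius

attribute [local instance] Matrix.frobeniusNormedAddCommGroup Matrix.frobeniusNormSMulClass

variable {m n : Type*} [Fintype m] [Fintype n]

theorem Matrix.frobenius_norm_sq_eq_re_trace {𝕜 : Type*} [RCLike 𝕜] (A : Matrix m n 𝕜) :
    ‖A‖ ^ 2 = RCLike.re (Aᴴ * A).trace := by
  rw [← frobenius_norm_transpose]
  change ‖WithLp.toLp 2 fun j => WithLp.toLp 2 fun i => A i j‖ ^ 2 = _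
  simp [PiLp.norm_sq_eq_of_L2, Matrix.trace, Matrix.mul_apply, RCLike.conj_mul]

theorem Matrix.frobenius_norm_mul_le_opN {k : ℕ} (A : Matrix (Fin k) (Fin k) ℂ)
    (B : Matrix (Fin k) n ℂ) : ‖A * B‖ ≤ opN A * ‖B‖ := by
  have hcols : ∀ C : Matrix (Fin k) n ℂ,
      ‖C‖ ^ 2 = ∑ j, ‖WithLp.toLp 2 fun i => C i j‖ ^ 2 := by
    intro C
    rw [← frobenius_norm_transpose]
    change ‖WithLp.toLp 2 fun j => WithLp.toLp 2 fun i => C i j‖ ^ 2 = _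
    rw [PiLp.norm_sq_eq_of_L2]
  refine le_of_sq_le_sq ?_ (by unfold opN; positivity)
  rw [mul_pow, hcols, hcols, Finset.mul_sum]
  refine Finset.sum_le_sum fun j _ => ?_
  rw [← mul_pow]
  gcongr
  exact (toEuclideanCLM (𝕜 := ℂ) A).le_opNorm (WithLp.toLp 2 fun i => B i j)

theorem Matrix.frobenius_norm_sq_eq_sum_mul {𝕜 ι : Type*} [RCLike 𝕜] [Fintype ι]
    [DecidableEq n] (f : ι → Matrix n n 𝕜) (hfsa : ∀ j, (f j)ᴴ = f j)
    (hfidem : ∀ j, f j * f j = f j) (hfsum : ∑ j, f j = 1) (A : Matrix m n 𝕜) :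
    ‖A‖ ^ 2 = ∑ j, ‖A * f j‖ ^ 2 := by
  have htrace : ∀ j, ((A * f j)ᴴ * (A * f j)).trace = (Aᴴ * A * f j).trace := by
    intro j
    rw [conjTranspose_mul, hfsa, Matrix.mul_assoc, trace_mul_comm, Matrix.mul_assoc,
      Matrix.mul_assoc, hfidem, Matrix.mul_assoc]
  simp only [frobenius_norm_sq_eq_re_trace, htrace, ← map_sum, ← trace_sum, ← Matrix.mul_sum,
    hfsum, Matrix.mul_one]

theorem hsN_eq_frobenius_norm_div {k : ℕ} (A : Matrix (Fin k) (Fin k) ℂ) :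
    hsN A = ‖A‖ / √k := by
  rw [hsN, trN, ← Real.sqrt_sq (norm_nonneg A), ← Real.sqrt_div' _ (Nat.cast_nonneg k),
    frobenius_norm_sq_eq_re_trace, star_eq_conjTranspose, Complex.div_natCast_re]
  rfl

variable {k : ℕ}

theorem hsN_add_le (A B : Matrix (Fin k) (Fin k) ℂ) : hsN (A + B) ≤ hsN A + hsN B := by
  simp only [hsN_eq_frobenius_norm_div, ← add_div]
  gcongr
  exact norm_add_le A B

theorem hsN_sub_le (A B : Matrix (Fin k) (Fin k) ℂ) : hsN (A - B) ≤ hsN A + hsN B := by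
  simp only [hsN_eq_frobenius_norm_div, ← add_div]
  gcongr
  exact norm_sub_le A B

theorem hsN_smul (c : ℂ) (A : Matrix (Fin k) (Fin k) ℂ) : hsN (c • A) = ‖c‖ * hsN A := by
  simp only [hsN_eq_frobenius_norm_div, norm_smul, mul_div_assoc]

theorem hsN_mul_le (A B : Matrix (Fin k) (Fin k) ℂ) : hsN (A * B) ≤ opN A * hsN B := by
  simp only [hsN_eq_frobenius_norm_div, ← mul_div_assoc]
  gcongr
  exact frobenius_norm_mul_le_opN A B

variable {ι : Type*} [Fintype ι] (f : ι → Matrix (Fin k) (Fin k) ℂ)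
  (hfsa : ∀ j, (f j)ᴴ = f j) (hfidem : ∀ j, f j * f j = f j) (hfsum : ∑ j, f j = 1)
include hfsa hfidem hfsum

theorem hsN_sq_eq_sum_mul (A : Matrix (Fin k) (Fin k) ℂ) :
    hsN A ^ 2 = ∑ j, hsN (A * f j) ^ 2 := by
  simp only [hsN_eq_frobenius_norm_div, div_pow, ← Finset.sum_div,
    ← frobenius_norm_sq_eq_sum_mul f hfsa hfidem hfsum A]

theorem hsN_le_of_forall_mul_le {A B : Matrix (Fin k) (Fin k) ℂ} {C : ℝ} (hC : 0 ≤ C)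
    (hAB : ∀ j, hsN (A * f j) ≤ C * hsN (B * f j)) : hsN A ≤ C * hsN B := by
  refine le_of_sq_le_sq ?_ (mul_nonneg hC (hsN_nonneg B))
  rw [mul_pow, hsN_sq_eq_sum_mul f hfsa hfidem hfsum A, hsN_sq_eq_sum_mul f hfsa hfidem hfsum B,
    Finset.mul_sum]
  refine Finset.sum_le_sum fun j _ => ?_
  rw [← mul_pow]
  exact pow_le_pow_left₀ (hsN_nonneg _) (hAB j) 2

end Frobenius

theorem NormedSpace.exp_mul_of_mul_eq_smul {𝕂 𝔸 : Type*} [RCLike 𝕂] [NormedRing 𝔸]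
    [NormedAlgebra 𝕂 𝔸] [CompleteSpace 𝔸] {a v : 𝔸} {c : 𝕂} (h : a * v = c • v) :
    exp a * v = exp c • v := by
  have hpow : ∀ n : ℕ, a ^ n * v = c ^ n • v := by
    intro n
    induction n with
    | zero => simp
    | succ n ih => rw [pow_succ', mul_assoc, ih, mul_smul_comm, h, smul_smul, ← pow_succ]
  refine ((exp_series_hasSum_exp' (𝕂 := 𝕂) a).mul_right v).unique ?_
  simp only [smul_mul_assoc, hpow, ← smul_assoc]
  exact (exp_series_hasSum_exp' (𝕂 := 𝕂) c).smul_const v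

theorem Matrix.exp_mul_of_mul_eq_smul {n : Type*} [Fintype n] [DecidableEq n]
    {A V : Matrix n n ℂ} {c : ℂ} (h : A * V = c • V) :
    NormedSpace.exp A * V = Complex.exp c • V := by
  rw [Complex.exp_eq_exp_ℂ]
  open scoped Norms.Operator in exact NormedSpace.exp_mul_of_mul_eq_smul h

theorem Finset.sum_smul_mul_of_orthogonal {R A ι : Type*} [Fintype ι] [CommSemiring R]
    [Semiring A] [Algebra R A] {f : ι → A} (hfidem : ∀ j, f j * f j = f j)
    (hforth : ∀ j j', j ≠ j' → f j * f j' = 0) (c : ι → R) (j : ι) :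
    (∑ l, c l • f l) * f j = c j • f j := by
  rw [Finset.sum_mul, Finset.sum_eq_single j
    (fun l _ hlj => by rw [smul_mul_assoc, hforth l j hlj, smul_zero])
    (fun hj => absurd (Finset.mem_univ j) hj), smul_mul_assoc, hfidem]

namespace Complex

theorem norm_exp_I_mul_ofReal_sub_one_le_of_abs_le {a b : ℝ} (hab : |a| ≤ |b|)
    (hb : |b| ≤ Real.pi) : ‖exp (I * a) - 1‖ ≤ ‖exp (I * b) - 1‖ := by
  have hcos : Real.cos b ≤ Real.cos a := by
    rw [← Real.cos_abs a, ← Real.cos_abs b]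
    exact Real.cos_le_cos_of_nonneg_of_le_pi (abs_nonneg a) hb hab
  have hhalf : ∀ x : ℝ, Real.cos x = 1 - 2 * Real.sin (x / 2) ^ 2 := fun x => by
    have := Real.cos_two_mul' (x / 2)
    rw [mul_div_cancel₀ x two_ne_zero, Real.cos_sq'] at this
    linarith
  rw [norm_exp_I_mul_ofReal_sub_one, norm_exp_I_mul_ofReal_sub_one]
  refine sq_le_sq.mp ?_
  nlinarith [hhalf a, hhalf b]

theorem norm_exp_I_mul_sub_exp_I_mul_le {β γ r : ℝ} (hγβ : |γ| ≤ |β|)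
    (hβ : |β| ≤ Real.pi) (hγ : 3 * r ≤ ‖exp (I * γ) - 1‖) :
    ‖exp (I * β) - exp (I * γ)‖ ≤ 6 * (‖exp (I * β) - 1‖ - 2 * r) := by
  have hmono := norm_exp_I_mul_ofReal_sub_one_le_of_abs_le hγβ hβ
  have htri := norm_sub_le_norm_sub_add_norm_sub (exp (I * β)) 1 (exp (I * γ))
  rw [norm_sub_rev 1] at htri
  linarith

end Complex

theorem sub_opN_mul_hsN_le_hsN_sub_mul {k : ℕ} {u E F : Matrix (Fin k) (Fin k) ℂ} {μ : ℂ}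
    (hE : E * F = μ • F) : (‖μ - 1‖ - opN (u - 1)) * hsN F ≤ hsN ((u - E) * F) := by
  have hdecomp : (μ - 1) • F = (u - 1) * F - (u - E) * F := by
    rw [Matrix.sub_mul, Matrix.sub_mul, hE, Matrix.one_mul, sub_smul, one_smul]
    abel
  have := hsN_sub_le ((u - 1) * F) ((u - E) * F)
  rw [← hdecomp, hsN_smul] at this
  nlinarith [hsN_mul_le (u - 1) F]

open Complex in
theorem hsN_sub_mul_le {k : ℕ} {u E E' F : Matrix (Fin k) (Fin k) ℂ} {β γ r : ℝ}
    (hE : E * F = exp (I * β) • F) (hE' : E' * F = exp (I * γ) • F)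
    (hu : opN (u - 1) ≤ 2 * r) (hγβ : |γ| ≤ |β|) (hβ : |β| ≤ Real.pi)
    (hγ : 3 * r ≤ ‖exp (I * γ) - 1‖) :
    hsN ((E - E') * F) ≤ 6 * hsN ((u - E) * F) := by
  have hlower := sub_opN_mul_hsN_le_hsN_sub_mul (u := u) hE
  have hscalar := norm_exp_I_mul_sub_exp_I_mul_le hγβ hβ hγ
  rw [Matrix.sub_mul, hE, hE', ← sub_smul, hsN_smul]
  nlinarith [hsN_nonneg F]

theorem stmt_13_general (k d : ℕ)
    (r : ℝ)
    (hre : 3 * r ≤ ‖1 - Complex.exp (4 * r * Complex.I)‖)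
    (f : Fin d → Matrix (Fin k) (Fin k) ℂ)
    (hfsa : ∀ j, star (f j) = f j) (hfidem : ∀ j, f j * f j = f j)
    (hforth : ∀ j j', j ≠ j' → f j * f j' = 0)
    (hfsum : ∑ j, f j = 1)
    (β : Fin d → ℝ) (hβ : ∀ j, β j ∈ Set.Icc (-Real.pi) Real.pi)
    (γ : Fin d → ℝ)
    (hγ1 : ∀ j, |β j| ≤ 4 * r → γ j = β j)
    (hγ2 : ∀ j, 4 * r < β j → γ j = 4 * r)
    (hγ3 : ∀ j, β j < -(4 * r) → γ j = -(4 * r))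
    (h z : Matrix (Fin k) (Fin k) ℂ)
    (hh : h = Complex.I • ∑ j, (β j : ℂ) • f j)
    (hz : z = Complex.I • ∑ j, (γ j : ℂ) • f j)
    (u : Matrix (Fin k) (Fin k) ℂ)
    (hunear : opN (u - 1) < 2 * r) :
    hsN (u - NormedSpace.exp z) ≤ 7 * hsN (u - NormedSpace.exp h) := by
  have hr : 0 ≤ r := by linarith [show 0 ≤ opN (u - 1) from norm_nonneg _]
  have heig : ∀ (c : Fin d → ℝ) j,
      NormedSpace.exp (Complex.I • ∑ l, (c l : ℂ) • f l) * f j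
        = Complex.exp (Complex.I * c j) • f j := fun c j =>
    Matrix.exp_mul_of_mul_eq_smul <| by
      rw [smul_mul_assoc, Finset.sum_smul_mul_of_orthogonal hfidem hforth, smul_smul]
  have hre' : 3 * r ≤ ‖Complex.exp (Complex.I * ↑(4 * r)) - 1‖ := by
    rw [norm_sub_rev, mul_comm Complex.I]
    exact_mod_cast hre
  have hstep : ∀ j, hsN ((NormedSpace.exp h - NormedSpace.exp z) * f j)
      ≤ 6 * hsN ((u - NormedSpace.exp h) * f j) := by
    intro j
    by_cases hj : |β j| ≤ 4 * r
    · rw [Matrix.sub_mul, hh, hz, heig, heig, ← sub_smul, hγ1 j hj, sub_self, hsN_smul,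
        norm_zero, zero_mul]
      exact mul_nonneg (by norm_num) (hsN_nonneg _)
    have hγj : |γ j| = 4 * r := by
      rcases lt_abs.mp (not_le.mp hj) with hpos | hneg
      · rw [hγ2 j hpos, abs_of_nonneg (by positivity)]
      · rw [hγ3 j (by linarith), abs_neg, abs_of_nonneg (by positivity)]
    have hβj : |β j| ≤ Real.pi := abs_le.mpr (hβ j)
    subst hh hz
    refine hsN_sub_mul_le (heig β j) (heig γ j) hunear.le (by linarith) hβj
      (hre'.trans (Complex.norm_exp_I_mul_ofReal_sub_one_le_of_abs_le ?_ (by linarith)))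
    rw [hγj, abs_of_nonneg (by positivity)]
  calc hsN (u - NormedSpace.exp z)
      = hsN ((u - NormedSpace.exp h) + (NormedSpace.exp h - NormedSpace.exp z)) := by
        rw [sub_add_sub_cancel]
    _ ≤ hsN (u - NormedSpace.exp h) + 6 * hsN (u - NormedSpace.exp h) := by
        grw [hsN_add_le, hsN_le_of_forall_mul_le f hfsa hfidem hfsum (by norm_num) hstep]
    _ = 7 * hsN (u - NormedSpace.exp h) := by ring

/-- truncation estimate from the proof of Lemma 8.2:
replacing the skew-Hermitian logarithm `h = i Σ β_j f_j` by its spectral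
truncation `z = i Σ γ_j f_j` at level `4r` worsens the `|·|₂`-distance to a
unitary `u` with `‖u − I‖ < 2r` by at most a factor `7`. -/
theorem stmt_13 (k d : ℕ) (hk : 0 < k) (hd : 0 < d)
    (r : ℝ) (hr : 0 < r) (hrπ : 4 * r ≤ Real.pi)
    (hre : 3 * r ≤ ‖1 - Complex.exp (4 * r * Complex.I)‖)
    (f : Fin d → Matrix (Fin k) (Fin k) ℂ)
    (hfsa : ∀ j, star (f j) = f j) (hfidem : ∀ j, f j * f j = f j)
    (hforth : ∀ j j', j ≠ j' → f j * f j' = 0)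
    (hfsum : ∑ j, f j = 1)
    (β : Fin d → ℝ) (hβ : ∀ j, β j ∈ Set.Icc (-Real.pi) Real.pi)
    (γ : Fin d → ℝ)
    (hγ1 : ∀ j, |β j| ≤ 4 * r → γ j = β j)
    (hγ2 : ∀ j, 4 * r < β j → γ j = 4 * r)
    (hγ3 : ∀ j, β j < -(4 * r) → γ j = -(4 * r))
    (h z : Matrix (Fin k) (Fin k) ℂ)
    (hh : h = Complex.I • ∑ j, (β j : ℂ) • f j)
    (hz : z = Complex.I • ∑ j, (γ j : ℂ) • f j)
    (u : Matrix (Fin k) (Fin k) ℂ) (hu : u ∈ Matrix.unitaryGroup (Fin k) ℂ)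
    (hunear : opN (u - 1) < 2 * r) :
    hsN (u - NormedSpace.exp z) ≤ 7 * hsN (u - NormedSpace.exp h) :=
  stmt_13_general k d r hre f hfsa hfidem hforth hfsum β hβ γ hγ1 hγ2 hγ3 h z hh hz u hunear
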